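/- Bridge operation, outcome (|0⟩+i|1⟩)/√2: let ι : ℂ²⊗ℂ² → ℂ²⊗ℂ²⊗ℂ² be the linear map inserting the state |+⟩ as the middle tensor factor (ι(|u⟩⊗|w⟩) = |u⟩⊗|+⟩⊗|w⟩), let Λ(Z)₁₂ and Λ(Z)₂₃ be controlled-Z gates between qubits 1,2 and qubits 2,3 respectively, and let ⟨m| be the functional on the middle qubit given by ⟨m|v⟩ = (⟨0|v⟩ − i⟨1|v⟩)/√2. Then for every |Ψ⟩ ∈ ℂ²⊗ℂ², (I⊗⟨m|⊗I) Λ(Z)₁₂ Λ(Z)₂₃ ι(|Ψ⟩) = (e^{−iπ/4}/√2) (S⊗S) Λ(Z) |Ψ⟩. In particular, a controlled-Z between qubits 1 and 3 is implemented up to S⊗S and a global phase, with normalization 1/√2. -/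

import Mathlib

/-!
All gates involved are diagonal in the computational basis and `|+⟩` has equal amplitudes, so the
amplitude of `|a⟩|c⟩|b⟩` after `Λ(Z)₁₂ Λ(Z)₂₃ ι` is `Ψ(a,b)/√2` for `c = 0` and
`(-1)^(a+b) Ψ(a,b)/√2` for `c = 1`. Contracting with `⟨m|` leaves the diagonal coefficient
`(1 - i (-1)^(a+b))/2`, which equals `(1 - i)/2 · i^a i^b (-1)^(ab)`, and `(1 - i)/2 = e^{-iπ/4}/√2`.
-/

noncomputable section

/-- The map `ι : ℂ²⊗ℂ² → ℂ²⊗ℂ²⊗ℂ²` inserting `|+⟩` as the middle tensor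
factor: `ι(|u⟩⊗|w⟩) = |u⟩⊗|+⟩⊗|w⟩`. -/
def insertPlusMid (Ψ : Fin 2 × Fin 2 → ℂ) : Fin 2 × Fin 2 × Fin 2 → ℂ :=
  fun p => (Real.sqrt 2 : ℂ)⁻¹ * Ψ (p.1, p.2.2)

/-- The controlled-Z gate `Λ(Z)₁₂` between qubits 1 and 2 of three qubits. -/
def CZ12 (v : Fin 2 × Fin 2 × Fin 2 → ℂ) : Fin 2 × Fin 2 × Fin 2 → ℂ :=
  fun p => (if p.1 = 1 ∧ p.2.1 = 1 then (-1 : ℂ) else 1) * v p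

/-- The controlled-Z gate `Λ(Z)₂₃` between qubits 2 and 3 of three qubits. -/
def CZ23 (v : Fin 2 × Fin 2 × Fin 2 → ℂ) : Fin 2 × Fin 2 × Fin 2 → ℂ :=
  fun p => (if p.2.1 = 1 ∧ p.2.2 = 1 then (-1 : ℂ) else 1) * v p

/-- The partial contraction `(I⊗⟨m|⊗I)` against the middle qubit, where
`⟨m|v⟩ = (⟨0|v⟩ − i⟨1|v⟩)/√2`. -/
def braMmid (v : Fin 2 × Fin 2 × Fin 2 → ℂ) : EuclideanSpace ℂ (Fin 2 × Fin 2) :=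
  WithLp.toLp 2 (fun q : Fin 2 × Fin 2 => (Real.sqrt 2 : ℂ)⁻¹ * (v (q.1, 0, q.2) - Complex.I * v (q.1, 1, q.2)))

/-- The gate `S ⊗ S` on two qubits, where `S = diag(1, i)`. -/
def SS (w : Fin 2 × Fin 2 → ℂ) : Fin 2 × Fin 2 → ℂ :=
  fun q => Complex.I ^ (q.1 : ℕ) * Complex.I ^ (q.2 : ℕ) * w q

/-- The controlled-Z gate `Λ(Z)` on two qubits. -/
def CZ (w : Fin 2 × Fin 2 → ℂ) : Fin 2 × Fin 2 → ℂ :=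
  fun q => (if q.1 = 1 ∧ q.2 = 1 then (-1 : ℂ) else 1) * w q

open Complex

theorem exp_neg_I_pi_div_four_mul_inv_sqrt_two :
    exp (-(I * Real.pi / 4)) * (Real.sqrt 2 : ℂ)⁻¹ = (1 - I) / 2 := by
  have hpolar : -(I * Real.pi / 4) = ((-(Real.pi / 4) : ℝ) : ℂ) * I := by push_cast; ring
  have hsqrt : (Real.sqrt 2 : ℂ) ≠ 0 := by exact_mod_cast (Real.sqrt_pos.mpr zero_lt_two).ne'
  rw [hpolar, exp_mul_I, ← ofReal_cos, ← ofReal_sin, Real.cos_neg, Real.sin_neg,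
    Real.cos_pi_div_four, Real.sin_pi_div_four]
  field_simp
  push_cast
  ring

theorem inv_sqrt_two_mul_inv_sqrt_two : (Real.sqrt 2 : ℂ)⁻¹ * (Real.sqrt 2 : ℂ)⁻¹ = 1 / 2 := by
  rw [← mul_inv, ← ofReal_mul, Real.mul_self_sqrt zero_le_two]
  norm_num

theorem braMmid_CZ12_CZ23_insertPlusMid_apply (Ψ : Fin 2 × Fin 2 → ℂ) (a b : Fin 2) :
    braMmid (CZ12 (CZ23 (insertPlusMid Ψ))) (a, b) =
      (1 - I * (if a = 1 then -1 else 1) * (if b = 1 then -1 else 1)) / 2 * Ψ (a, b) := by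
  simp only [braMmid, CZ12, CZ23, insertPlusMid, WithLp.ofLp_toLp, Fin.zero_ne_one, and_false,
    false_and, and_true, true_and, if_false]
  linear_combination (1 - I * (if a = 1 then -1 else 1) * (if b = 1 then -1 else 1)) * Ψ (a, b) *
    inv_sqrt_two_mul_inv_sqrt_two

theorem one_sub_I_mul_signs_div_two (a b : Fin 2) :
    (1 - I * (if a = 1 then -1 else 1) * (if b = 1 then -1 else 1)) / 2 =
      (1 - I) / 2 * (I ^ (a : ℕ) * I ^ (b : ℕ) * (if a = 1 ∧ b = 1 then -1 else 1)) := by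
  fin_cases a <;> fin_cases b <;> norm_num [Complex.ext_iff]

/-- Bridge operation, outcome `(|0⟩+i|1⟩)/√2`: a controlled-Z between qubits
1 and 3 is implemented up to `S⊗S`, a global phase `e^{−iπ/4}`, and
normalization `1/√2`. -/
theorem bridge_operation_outcome_zero (Ψ : Fin 2 × Fin 2 → ℂ) :
    braMmid (CZ12 (CZ23 (insertPlusMid Ψ))) =
      (Complex.exp (-(Complex.I * Real.pi / 4)) * (Real.sqrt 2 : ℂ)⁻¹) • SS (CZ Ψ) := by
  funext ⟨a, b⟩
  rw [braMmid_CZ12_CZ23_insertPlusMid_apply, exp_neg_I_pi_div_four_mul_inv_sqrt_two,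
    one_sub_I_mul_signs_div_two]
  simp only [Pi.smul_apply, smul_eq_mul, SS, CZ]
  ring

end
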